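/- For all integers n, k with 1 ≤ k ≤ n, the polynomial identity [n−k+1]_q · ( q^{n+k(k+1)/2} · [n−1 choose k]_q · [2n−k choose n]_q + q^{n+k(k−1)/2} · [n−1 choose k−1]_q · [2n−k+1 choose n]_q ) = [n+1]_q · q^{n+k(k−1)/2} · [2n−k choose k]_q · [2n−2k choose n−k]_q holds in ℤ[q]; equivalently, S_q(n,k) + S_q(n,k−1) = q^{n+k(k−1)/2} [2n−k choose k]_q [2n−2k choose n−k]_q / [n−k+1]_q, where S_q(n,j) = q^{n+j(j+1)/2} [n−1 choose j]_q [2n−j choose n]_q / [n+1]_q. -/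

import Mathlib

open Polynomial

/-- The q-integer `[n]_q = 1 + q + ⋯ + q^(n-1)` in `ℤ[q]`. -/
noncomputable def qInt (n : ℕ) : Polynomial ℤ := ∑ i ∈ Finset.range n, X ^ i

/-- The Gaussian binomial coefficient `[a choose b]_q` in `ℤ[q]`, defined by the
standard q-Pascal recurrence `[n+1 choose k+1] = [n choose k] + q^(k+1) [n choose k+1]`. -/
noncomputable def qBinom : ℕ → ℕ → Polynomial ℤ
  | _, 0 => 1
  | 0, _ + 1 => 0
  | n + 1, k + 1 => qBinom n k + X ^ (k + 1) * qBinom n (k + 1)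

/-!
Put `n = m + j + 1`, `k = j + 1`, write `[a, b]` for `[a choose b]_q` and divide by
`q^(n + k(k-1)/2)`. With `B = [2m+j+1, m+j+1]`, trinomial revision turns the right-hand side into
`[m+j+2] [m+j+1, j+1] B`, and absorption turns `[m+1] [2m+j+2, m+j+1]` into `[2m+j+2] B`.
Splitting `[2m+j+2] = [m+1] + q^(m+1) [m+j+1]`, the q-Pascal rule and absorption
`[m+j+1] [m+j, j] = [j+1] [m+j+1, j+1]` collapse the left-hand side to
`([m+1] + q^(m+1) [j+1]) [m+j+1, j+1] B = [m+j+2] [m+j+1, j+1] B`.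
-/

theorem qInt_zero : qInt 0 = 0 := by simp [qInt]

theorem qInt_succ (n : ℕ) : qInt (n + 1) = qInt n + X ^ n := by
  simp [qInt, Finset.sum_range_succ]

theorem qInt_add (a b : ℕ) : qInt (a + b) = qInt a + X ^ a * qInt b := by
  induction b with
  | zero => simp [qInt_zero]
  | succ b ih => rw [← Nat.add_assoc, qInt_succ, ih, qInt_succ b]; ring

theorem qInt_succ_ne_zero (n : ℕ) : qInt (n + 1) ≠ 0 := by
  intro h
  have h1 := congrArg (eval 1) h
  simp [qInt] at h1
  omega

theorem qBinom_zero_right (n : ℕ) : qBinom n 0 = 1 := by cases n <;> rfl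

theorem qBinom_succ_succ (n k : ℕ) :
    qBinom (n + 1) (k + 1) = qBinom n k + X ^ (k + 1) * qBinom n (k + 1) := rfl

theorem qBinom_eq_zero_of_lt : ∀ {a b : ℕ}, a < b → qBinom a b = 0
  | 0, _ + 1, _ => rfl
  | a + 1, b + 1, h => by
    rw [qBinom_succ_succ, qBinom_eq_zero_of_lt (by omega : a < b),
      qBinom_eq_zero_of_lt (by omega : a < b + 1)]
    ring

theorem qBinom_self : ∀ n : ℕ, qBinom n n = 1
  | 0 => rfl
  | n + 1 => by rw [qBinom_succ_succ, qBinom_self n, qBinom_eq_zero_of_lt n.lt_succ_self]; ring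

noncomputable def qFact : ℕ → Polynomial ℤ
  | 0 => 1
  | n + 1 => qFact n * qInt (n + 1)

theorem qFact_succ (n : ℕ) : qFact (n + 1) = qFact n * qInt (n + 1) := rfl

theorem qFact_ne_zero : ∀ n : ℕ, qFact n ≠ 0
  | 0 => one_ne_zero
  | n + 1 => mul_ne_zero (qFact_ne_zero n) (qInt_succ_ne_zero n)

theorem qFact_mul_qFact_mul_qBinom : ∀ a b : ℕ,
    qFact a * qFact b * qBinom (a + b) b = qFact (a + b)
  | a, 0 => by simp [qBinom_zero_right, qFact]
  | 0, b + 1 => by simp [qBinom_self, qFact]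
  | a + 1, b + 1 => by
    have ih₁ := qFact_mul_qFact_mul_qBinom (a + 1) b
    have ih₂ := qFact_mul_qFact_mul_qBinom a (b + 1)
    rw [show a + 1 + b = a + b + 1 by omega, qFact_succ a] at ih₁
    rw [show a + (b + 1) = a + b + 1 by omega, qFact_succ b] at ih₂
    have hsplit : qInt (a + b + 2) = qInt (b + 1) + X ^ (b + 1) * qInt (a + 1) := by
      rw [← qInt_add]; congr 1; omega
    rw [show a + 1 + (b + 1) = a + b + 1 + 1 by omega, qBinom_succ_succ, qFact_succ (a + b + 1),
      hsplit, qFact_succ a, qFact_succ b]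
    linear_combination qInt (b + 1) * ih₁ + X ^ (b + 1) * qInt (a + 1) * ih₂
  termination_by a b => a + b

/-- Absorption: `[k+1] [n+1, k+1] = [n+1] [n, k]`, with `n = a + b`, `k = b`. -/
theorem qInt_mul_qBinom_succ (a b : ℕ) :
    qInt (b + 1) * qBinom (a + b + 1) (b + 1) = qInt (a + b + 1) * qBinom (a + b) b := by
  refine mul_left_cancel₀ (mul_ne_zero (qFact_ne_zero a) (qFact_ne_zero b)) ?_
  calc qFact a * qFact b * (qInt (b + 1) * qBinom (a + b + 1) (b + 1))
      = qFact a * qFact (b + 1) * qBinom (a + (b + 1)) (b + 1) := by rw [qFact_succ]; ring_nf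
    _ = qFact (a + b) * qInt (a + b + 1) := by rw [qFact_mul_qFact_mul_qBinom, ← qFact_succ]; rfl
    _ = qFact a * qFact b * (qInt (a + b + 1) * qBinom (a + b) b) := by
      rw [← qFact_mul_qFact_mul_qBinom a b]; ring

/-- Upper absorption: `[n-k+1] [n+1, k] = [n+1] [n, k]`, with `n = a + b`, `k = b`. -/
theorem qInt_mul_qBinom_succ_left (a b : ℕ) :
    qInt (a + 1) * qBinom (a + b + 1) b = qInt (a + b + 1) * qBinom (a + b) b := by
  refine mul_left_cancel₀ (mul_ne_zero (qFact_ne_zero a) (qFact_ne_zero b)) ?_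
  calc qFact a * qFact b * (qInt (a + 1) * qBinom (a + b + 1) b)
      = qFact (a + 1) * qFact b * qBinom (a + 1 + b) b := by rw [qFact_succ]; ring_nf
    _ = qFact (a + b) * qInt (a + b + 1) := by rw [qFact_mul_qFact_mul_qBinom, ← qFact_succ]; ring_nf
    _ = qFact a * qFact b * (qInt (a + b + 1) * qBinom (a + b) b) := by
      rw [← qFact_mul_qFact_mul_qBinom a b]; ring

/-- Trinomial revision: `[n, k] [k, i] = [n, i] [n-i, k-i]`, with `n = a + b + c`, `k = b + c`,
`i = c`. -/
theorem qBinom_mul_qBinom (a b c : ℕ) :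
    qBinom (a + b + c) (b + c) * qBinom (b + c) c = qBinom (a + b + c) c * qBinom (a + b) b := by
  refine mul_left_cancel₀
    (mul_ne_zero (mul_ne_zero (qFact_ne_zero a) (qFact_ne_zero b)) (qFact_ne_zero c)) ?_
  calc qFact a * qFact b * qFact c * (qBinom (a + b + c) (b + c) * qBinom (b + c) c)
      = qFact a * (qFact b * qFact c * qBinom (b + c) c) * qBinom (a + (b + c)) (b + c) := by
        rw [← Nat.add_assoc]; ring
    _ = qFact (a + b + c) := by rw [qFact_mul_qFact_mul_qBinom, qFact_mul_qFact_mul_qBinom,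
        Nat.add_assoc]
    _ = qFact a * qFact b * qFact c * (qBinom (a + b + c) c * qBinom (a + b) b) := by
      rw [← qFact_mul_qFact_mul_qBinom (a + b) c, ← qFact_mul_qFact_mul_qBinom a b]; ring

theorem sq_sum_identity_shifted (m j : ℕ) :
    qInt (m + 1) *
        (X ^ (j + 1) * (qBinom (m + j) (j + 1) * qBinom (2 * m + j + 1) (m + j + 1))
          + qBinom (m + j) j * qBinom (2 * m + j + 2) (m + j + 1))
      = qInt (m + j + 2) * (qBinom (2 * m + j + 1) (j + 1) * qBinom (2 * m) m) := by
  set B := qBinom (2 * m + j + 1) (m + j + 1)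
  set P := qBinom (m + j + 1) (j + 1)
  have hY := qInt_mul_qBinom_succ_left m (m + j + 1)
  rw [show m + (m + j + 1) + 1 = 2 * m + j + 2 by omega,
    show m + (m + j + 1) = 2 * m + j + 1 by omega] at hY
  have hsplit := qInt_add (m + 1) (m + j + 1)
  rw [show m + 1 + (m + j + 1) = 2 * m + j + 2 by omega] at hsplit
  have htop := qInt_add (m + 1) (j + 1)
  rw [show m + 1 + (j + 1) = m + j + 2 by omega] at htop
  have hrev := qBinom_mul_qBinom m m (j + 1)
  rw [show m + m + (j + 1) = 2 * m + j + 1 by omega, show m + (j + 1) = m + j + 1 by omega,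
    ← two_mul] at hrev
  have hpascal : P = qBinom (m + j) j + X ^ (j + 1) * qBinom (m + j) (j + 1) :=
    qBinom_succ_succ (m + j) j
  linear_combination qBinom (m + j) j * hY + qBinom (m + j) j * B * hsplit
    - qInt (m + 1) * B * hpascal - X ^ (m + 1) * B * qInt_mul_qBinom_succ m j
    + qInt (m + j + 2) * hrev - B * P * htop

/-- [n−k+1]_q · ( q^(n+k(k+1)/2) [n−1 choose k]_q [2n−k choose n]_q
      + q^(n+k(k−1)/2) [n−1 choose k−1]_q [2n−k+1 choose n]_q )
  = [n+1]_q · q^(n+k(k−1)/2) [2n−k choose k]_q [2n−2k choose n−k]_q,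
i.e. S_q(n,k) + S_q(n,k−1) = q^(n+k(k−1)/2) [2n−k choose k]_q [2n−2k choose n−k]_q / [n−k+1]_q. -/
theorem sq_sum_identity (n k : ℕ) (hk1 : 1 ≤ k) (hk : k ≤ n) :
    qInt (n - k + 1) *
        (X ^ (n + k * (k + 1) / 2) * (qBinom (n - 1) k * qBinom (2 * n - k) n)
          + X ^ (n + k * (k - 1) / 2) * (qBinom (n - 1) (k - 1) * qBinom (2 * n - k + 1) n))
      = qInt (n + 1) *
          (X ^ (n + k * (k - 1) / 2) *
            (qBinom (2 * n - k) k * qBinom (2 * n - 2 * k) (n - k))) := by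
  obtain ⟨j, rfl⟩ : ∃ j, k = j + 1 := ⟨k - 1, by omega⟩
  obtain ⟨m, rfl⟩ : ∃ m, n = m + j + 1 := ⟨n - (j + 1), by omega⟩
  have hexp : m + j + 1 + (j + 1) * (j + 1 + 1) / 2 = m + j + 1 + (j + 1) * j / 2 + (j + 1) := by
    rw [show (j + 1) * (j + 1 + 1) = (j + 1) * j + 2 * (j + 1) by ring,
      Nat.add_mul_div_left _ _ two_pos]
    ring
  rw [hexp, pow_add, Nat.add_sub_cancel, Nat.add_sub_cancel,
    show m + j + 1 - (j + 1) = m by omega, show 2 * (m + j + 1) - (j + 1) = 2 * m + j + 1 by omega,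
    show 2 * (m + j + 1) - 2 * (j + 1) = 2 * m by omega]
  linear_combination (X : ℤ[X]) ^ (m + j + 1 + (j + 1) * j / 2) * sq_sum_identity_shifted m j
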